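/- Let G be a graph of order n = 4k + 1 whose Seidel matrix S is singular with a nullspace vector φ ∈ {±1}^n. Then the number of edges of G satisfies 3k ≤ |E(G)| ≤ 8k² - k. -/

import Mathlib

/-!
Write `T = ∑ φ i` and `A` for the adjacency matrix, so that `S = J - I - 2A`. Then `S φ = 0` reads
`2 (A φ)_i = T - φ_i`: hence `T` is odd (so, replacing `φ` by `-φ`, positive), `T - φ_i ≤ 2 deg i`,
and summing over `i` gives `2 ∑ deg i · φ_i = T (n - 1)`. Splitting `4|E| = 2 ∑ deg i` into
`2 ∑ deg i · φ_i` and `2 ∑ (1 - φ_i) deg i`, the second part is at least `(T + 1)(n - T)`, and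
`T (n - 1) + (T + 1)(n - T) ≥ 3 (n - 1)` for odd `1 ≤ T ≤ n`. The complement has Seidel matrix
`-S`, so the same bound holds for it, and `|E(G)| + |E(Gᶜ)| = n(n - 1)/2` gives the upper bound.
-/

open Matrix Finset

def seidelMatrix {n : ℕ} (G : SimpleGraph (Fin n)) [DecidableRel G.Adj] :
    Matrix (Fin n) (Fin n) ℤ :=
  Matrix.of fun i j => if i = j then 0 else if G.Adj i j then -1 else 1

namespace SimpleGraph

variable {V : Type*} [Fintype V] (G : SimpleGraph V) [DecidableRel G.Adj]

theorem sum_adjMatrix_mulVec {R : Type*} [Semiring R] (f : V → R) :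
    ∑ i, (G.adjMatrix R *ᵥ f) i = ∑ i, G.degree i * f i := by
  rw [← one_dotProduct, dotProduct_mulVec]
  simp [dotProduct]

theorem abs_adjMatrix_mulVec_apply_le {R : Type*} [Ring R] [LinearOrder R] [IsOrderedRing R]
    {f : V → R} (hf : ∀ i, |f i| ≤ 1) (i : V) :
    |(G.adjMatrix R *ᵥ f) i| ≤ G.degree i := by
  rw [adjMatrix_mulVec_apply]
  calc |∑ j ∈ G.neighborFinset i, f j| ≤ ∑ j ∈ G.neighborFinset i, |f j| := abs_sum_le_sum_abs _ _
    _ ≤ ∑ j ∈ G.neighborFinset i, 1 := sum_le_sum fun j _ => hf j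
    _ = G.degree i := by simp

theorem card_edgeFinset_add_card_edgeFinset_compl [DecidableEq V] :
    #G.edgeFinset + #Gᶜ.edgeFinset = (Fintype.card V).choose 2 := by
  rw [← card_edgeFinset_top_eq_card_choose_two, ← card_union_of_disjoint
    (disjoint_edgeFinset.2 disjoint_compl_right), ← edgeFinset_sup]
  congr! 2
  exact sup_compl_eq_top

end SimpleGraph

variable {n : ℕ} (G : SimpleGraph (Fin n)) [DecidableRel G.Adj]

theorem seidelMatrix_eq :
    seidelMatrix G = of (fun _ _ => 1) - 1 - (2 : ℤ) • G.adjMatrix ℤ := by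
  ext i j
  rw [Matrix.sub_apply, Matrix.sub_apply, Matrix.smul_apply, SimpleGraph.adjMatrix_apply, one_apply]
  by_cases hij : i = j
  · simp [seidelMatrix, hij]
  · by_cases h : G.Adj i j <;> simp [seidelMatrix, hij, h]

theorem seidelMatrix_compl : seidelMatrix Gᶜ = -seidelMatrix G := by
  ext i j
  by_cases hij : i = j
  · simp [seidelMatrix, hij]
  · by_cases h : G.Adj i j <;> simp [seidelMatrix, hij, h]

theorem seidelMatrix_mulVec_apply (φ : Fin n → ℤ) (i : Fin n) :
    (seidelMatrix G *ᵥ φ) i = ∑ j, φ j - φ i - 2 * (G.adjMatrix ℤ *ᵥ φ) i := by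
  rw [seidelMatrix_eq, sub_mulVec, sub_mulVec, smul_mulVec]
  simp [mulVec, dotProduct]

namespace seidelMatrix

variable {G} {φ : Fin n → ℤ} (hφ : ∀ i, φ i = 1 ∨ φ i = -1) (h0 : seidelMatrix G *ᵥ φ = 0)
include h0

theorem two_mul_adjMatrix_mulVec_apply (i : Fin n) :
    2 * (G.adjMatrix ℤ *ᵥ φ) i = ∑ j, φ j - φ i := by
  have := seidelMatrix_mulVec_apply G φ i
  rw [h0, Pi.zero_apply] at this
  linarith

theorem two_mul_sum_degree_mul :
    2 * ∑ i, G.degree i * φ i = (∑ i, φ i) * (n - 1) := by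
  rw [← G.sum_adjMatrix_mulVec, mul_sum]
  simp_rw [two_mul_adjMatrix_mulVec_apply h0]
  simp [sum_sub_distrib, mul_sub, mul_comm]

include hφ

theorem odd_sum [NeZero n] : Odd (∑ i, φ i) := by
  have := two_mul_adjMatrix_mulVec_apply h0 0
  rcases hφ 0 with h | h
  · exact ⟨(G.adjMatrix ℤ *ᵥ φ) 0, by linarith⟩
  · exact ⟨(G.adjMatrix ℤ *ᵥ φ) 0 - 1, by linarith⟩

theorem sum_sub_le_two_mul_degree (i : Fin n) : ∑ j, φ j - φ i ≤ 2 * G.degree i := by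
  have hφ1 (j : Fin n) : |φ j| ≤ 1 := by rcases hφ j with h | h <;> simp [h]
  have hle := G.abs_adjMatrix_mulVec_apply_le hφ1 i
  rw [← two_mul_adjMatrix_mulVec_apply h0]
  linarith [le_abs_self ((G.adjMatrix ℤ *ᵥ φ) i)]

theorem three_mul_le_four_mul_card_edgeFinset_of_sum_pos [NeZero n] (hT : 0 < ∑ i, φ i) :
    3 * (n - 1) ≤ 4 * #G.edgeFinset := by
  set T := ∑ i, φ i
  have hTn : T ≤ n := by
    calc T ≤ ∑ _i : Fin n, (1 : ℤ) := sum_le_sum fun i _ => by rcases hφ i with h | h <;> omega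
      _ = n := by simp
  have hvertex (i : Fin n) : (T + 1) * (1 - φ i) ≤ 2 * (1 - φ i) * G.degree i := by
    have := sum_sub_le_two_mul_degree hφ h0 i
    rcases hφ i with h | h <;> rw [h] at this ⊢ <;> linarith
  have hedges : (T + 1) * (n - T) + T * (n - 1) ≤ 4 * #G.edgeFinset := by
    calc (T + 1) * (n - T) + T * (n - 1)
        = ∑ i, (T + 1) * (1 - φ i) + 2 * ∑ i, G.degree i * φ i := by
          rw [two_mul_sum_degree_mul h0, ← mul_sum, sum_sub_distrib]; simp [T]
      _ ≤ ∑ i, 2 * (1 - φ i) * G.degree i + 2 * ∑ i, G.degree i * φ i :=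
          add_le_add_left (sum_le_sum fun i _ => hvertex i) _
      _ = 2 * ∑ i, (G.degree i : ℤ) := by
          rw [mul_sum, mul_sum, ← sum_add_distrib]; congr 1; ext i; ring
      _ = 4 * #G.edgeFinset := by
          rw [← Nat.cast_sum, G.sum_degrees_eq_twice_card_edges]; push_cast; ring
  obtain ⟨t, ht⟩ : Odd T := odd_sum hφ h0
  clear_value T
  subst ht
  have ht0 : 0 ≤ t := by omega
  -- the difference of the two sides of `hedges` and of the goal is `4t(n - t - 2) ≥ 4t(t - 1)`
  have : 3 * ((n : ℤ) - 1) ≤ 4 * #G.edgeFinset := by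
    nlinarith [mul_nonneg ht0 (sub_nonneg.2 hTn), Int.le_self_sq t]
  omega

theorem three_mul_le_four_mul_card_edgeFinset [NeZero n] :
    3 * (n - 1) ≤ 4 * #G.edgeFinset := by
  obtain hT | hT : 0 < ∑ i, φ i ∨ 0 < ∑ i, (-φ) i := by
    obtain ⟨t, ht⟩ := odd_sum hφ h0
    simp only [Pi.neg_apply, sum_neg_distrib]
    omega
  · exact three_mul_le_four_mul_card_edgeFinset_of_sum_pos hφ h0 hT
  · refine three_mul_le_four_mul_card_edgeFinset_of_sum_pos (φ := -φ) (fun i => ?_) ?_ hT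
    · rcases hφ i with h | h <;> simp [h]
    · rw [mulVec_neg, h0, neg_zero]

end seidelMatrix

theorem edge_count_bounds_general {n k : ℕ} (hn : n = 4 * k + 1)
    (G : SimpleGraph (Fin n)) [DecidableRel G.Adj]
    (hφ : ∃ φ : Fin n → ℤ, (∀ i, φ i = 1 ∨ φ i = -1) ∧ (seidelMatrix G).mulVec φ = 0) :
    3 * k ≤ G.edgeFinset.card ∧ G.edgeFinset.card ≤ 8 * k ^ 2 - k := by
  obtain ⟨φ, hφ, h0⟩ := hφ
  have : NeZero n := ⟨by omega⟩
  have hG := seidelMatrix.three_mul_le_four_mul_card_edgeFinset hφ h0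
  have hGc := seidelMatrix.three_mul_le_four_mul_card_edgeFinset (G := Gᶜ) hφ
    (by rw [seidelMatrix_compl, neg_mulVec, h0, neg_zero])
  have htotal := G.card_edgeFinset_add_card_edgeFinset_compl
  have hchoose : n.choose 2 = 8 * k ^ 2 + 2 * k := by
    rw [hn, Nat.choose_two_right, Nat.add_sub_cancel]
    exact Nat.div_eq_of_eq_mul_left two_pos (by ring)
  rw [Fintype.card_fin, hchoose] at htotal
  omega

theorem edge_count_bounds {n k : ℕ} (hn : n = 4 * k + 1)
    (G : SimpleGraph (Fin n)) [DecidableRel G.Adj]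
    (hsing : (seidelMatrix G).det = 0)
    (hφ : ∃ φ : Fin n → ℤ, (∀ i, φ i = 1 ∨ φ i = -1) ∧ (seidelMatrix G).mulVec φ = 0) :
    3 * k ≤ G.edgeFinset.card ∧ G.edgeFinset.card ≤ 8 * k ^ 2 - k :=
  edge_count_bounds_general hn G hφ
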